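/- arXiv:1908.09078 — 3 statements merged into one kernel-verified Lean document; each statement's English description precedes it below -/
import Mathlib

section
/- Let m ≤ n, let f : ℝ^{m×n} → ℝ be any function, let ν > 0, and let κ be a positive integer with κ ≤ m. Suppose X* is a global minimizer of X ↦ ν f(X) + rank(X) over ℝ^{m×n} with rank(X*) = r ≤ κ. Let X* = U* Diag(σ(X*)) V*ᵀ be a singular value decomposition with U* ∈ O^m, V* ∈ O^n, and define R* ∈ ℝ^{m×κ} with columns √σ_j(X*)·U*_j and L* ∈ ℝ^{n×κ} with columns √σ_j(X*)·V*_j for j = 1,…,κ. Then (R*, L*) is a global minimizer of (U,V) ↦ ν f(UVᵀ) + (1/2)(‖U‖_{2,0} + ‖V‖_{2,0}) over ℝ^{m×κ} × ℝ^{n×κ}. -/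
open scoped BigOperators

noncomputable section

namespace Paper

open Matrix

/-- Euclidean dot product on `ℝ^p`. -/
def vdot {p : ℕ} (y z : Fin p → ℝ) : ℝ := ∑ i, y i * z i

/-- Euclidean norm on `ℝ^p`. -/
def vnorm {p : ℕ} (y : Fin p → ℝ) : ℝ := Real.sqrt (∑ i, (y i) ^ 2)

/-- Trace (Frobenius) inner product of matrices. -/
def finner {m n : ℕ} (X Y : Matrix (Fin m) (Fin n) ℝ) : ℝ := ∑ i, ∑ j, X i j * Y i j

/-- Frobenius norm of a matrix. -/
def fnorm {m n : ℕ} (X : Matrix (Fin m) (Fin n) ℝ) : ℝ := Real.sqrt (∑ i, ∑ j, (X i j) ^ 2)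

/-- Euclidean norm of the `j`-th column of a matrix. -/
def colNorm {m k : ℕ} (U : Matrix (Fin m) (Fin k) ℝ) (j : Fin k) : ℝ :=
  Real.sqrt (∑ i, (U i j) ^ 2)

/-- The `ℓ_{2,0}` norm of a matrix: the number of nonzero columns. -/
def l20 {m k : ℕ} (U : Matrix (Fin m) (Fin k) ℝ) : ℕ :=
  Set.ncard {j : Fin k | (fun i => U i j) ≠ 0}

/-- Number of nonzero entries of a vector. -/
def zeroNorm {k : ℕ} (z : Fin k → ℝ) : ℕ := Set.ncard {i : Fin k | z i ≠ 0}

/-- `k`-restricted smallest eigenvalue of `A*A`. -/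
def lamMin {m n p : ℕ} (A : Matrix (Fin m) (Fin n) ℝ →ₗ[ℝ] (Fin p → ℝ)) (k : ℕ) : ℝ :=
  sInf {t : ℝ | ∃ X : Matrix (Fin m) (Fin n) ℝ, X.rank ≤ k ∧ fnorm X = 1 ∧ t = (vnorm (A X)) ^ 2}

/-- `k`-restricted largest eigenvalue of `A*A`. -/
def lamMax {m n p : ℕ} (A : Matrix (Fin m) (Fin n) ℝ →ₗ[ℝ] (Fin p → ℝ)) (k : ℕ) : ℝ :=
  sSup {t : ℝ | ∃ X : Matrix (Fin m) (Fin n) ℝ, X.rank ≤ k ∧ fnorm X = 1 ∧ t = (vnorm (A X)) ^ 2}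

/-- Operator (spectral) norm of the sampling operator. -/
def opNorm {m n p : ℕ} (A : Matrix (Fin m) (Fin n) ℝ →ₗ[ℝ] (Fin p → ℝ)) : ℝ :=
  sSup {t : ℝ | ∃ X : Matrix (Fin m) (Fin n) ℝ, fnorm X = 1 ∧ t = vnorm (A X)}

/-- Spectral norm of a matrix. -/
def specNorm {a b : ℕ} (U : Matrix (Fin a) (Fin b) ℝ) : ℝ :=
  sSup {t : ℝ | ∃ x : Fin b → ℝ, vnorm x = 1 ∧ t = vnorm (U.mulVec x)}

/-- Adjoint of `A` w.r.t. the trace inner product, applied to `y`. -/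
def adjApply {m n p : ℕ} (A : Matrix (Fin m) (Fin n) ℝ →ₗ[ℝ] (Fin p → ℝ))
    (y : Fin p → ℝ) : Matrix (Fin m) (Fin n) ℝ :=
  fun i j => vdot (A (Matrix.single i j 1)) y

/-- `A*A` applied to a matrix. -/
def AstarA {m n p : ℕ} (A : Matrix (Fin m) (Fin n) ℝ →ₗ[ℝ] (Fin p → ℝ))
    (X : Matrix (Fin m) (Fin n) ℝ) : Matrix (Fin m) (Fin n) ℝ :=
  adjApply A (A X)

/-- Singular values of `X` arranged nonincreasingly, `sigmaFin X 0` the largest. -/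
def sigmaFin {m n : ℕ} (X : Matrix (Fin m) (Fin n) ℝ) : Fin m → ℝ := fun j =>
  Real.sqrt ((Matrix.isHermitian_mul_conjTranspose_self X).eigenvalues
    ((Tuple.sort (Matrix.isHermitian_mul_conjTranspose_self X).eigenvalues) j.rev))

/-- The `i`-th largest singular value (1-indexed); `0` for out-of-range indices. -/
def singularValue {m n : ℕ} (i : ℕ) (X : Matrix (Fin m) (Fin n) ℝ) : ℝ :=
  if h : 1 ≤ i ∧ i ≤ m then sigmaFin X ⟨i - 1, by omega⟩ else 0

/-- The family `𝓛` of proper lsc convex functions `φ : ℝ → (−∞,∞]` with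
`[0,1] ⊆ int(dom φ)`, `φ(1) = 1` and `min_{t ∈ [0,1]} φ(t) = 0` attained at `t*`. -/
structure LFamily where
  phi : ℝ → EReal
  lsc : LowerSemicontinuous phi
  convex : ∀ x y a b : ℝ, 0 ≤ a → 0 ≤ b → a + b = 1 →
    phi (a * x + b * y) ≤ (a : EReal) * phi x + (b : EReal) * phi y
  ne_bot : ∀ x, phi x ≠ ⊥
  icc_subset_interior_dom : Set.Icc (0 : ℝ) 1 ⊆ interior {t : ℝ | phi t ≠ ⊤}
  phi_one : phi 1 = 1
  tstar : ℝ
  tstar_mem : tstar ∈ Set.Icc (0 : ℝ) 1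
  phi_tstar : phi tstar = 0
  phi_nonneg : ∀ t ∈ Set.Icc (0 : ℝ) 1, 0 ≤ phi t

/-- Left derivative of `φ` at `1`, as the supremum of difference quotients. -/
def leftDerivOne (L : LFamily) : ℝ :=
  sSup {q : ℝ | ∃ t : ℝ, 0 ≤ t ∧ t < 1 ∧ q = (1 - (L.phi t).toReal) / (1 - t)}

/-- The function `ψ`: equal to `φ` on `[0,1]` and `+∞` elsewhere. -/
def psi (L : LFamily) (t : ℝ) : EReal := if t ∈ Set.Icc (0 : ℝ) 1 then L.phi t else ⊤

/-- The conjugate `ψ*` of `ψ`. -/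
def psiStar (L : LFamily) (s : ℝ) : EReal := ⨆ t : ℝ, ((s * t : ℝ) : EReal) - psi L t


/-- Rectangular diagonal matrix carrying the singular values of `X`. -/
def svDiag {m n : ℕ} (X : Matrix (Fin m) (Fin n) ℝ) : Matrix (Fin m) (Fin n) ℝ :=
  fun i j => if (i : ℕ) = (j : ℕ) then singularValue ((i : ℕ) + 1) X else 0

/-!
The factors multiply back to `X*`: entrywise, `R* L*ᵀ = ∑_{j < κ} σ_j U*_j V*_jᵀ`, and `σ_j` vanishes
for `j ≥ rank X*`, so the sum may be extended to all `j < m`, which is `U* Diag(σ) V*ᵀ = X*`. For the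
same reason `R*` and `L*` have at most `rank X*` nonzero columns, so the objective at `(R*, L*)` is at
most `ν f(X*) + rank X*`. For any `(U, V)`, the rank of a matrix is at most its number of nonzero
columns, hence `rank (U Vᵀ) ≤ min (‖U‖_{2,0}, ‖V‖_{2,0}) ≤ (‖U‖_{2,0} + ‖V‖_{2,0}) / 2`, and the
minimality of `X*` at `X = U Vᵀ` concludes.
-/
lemma singularValue_nonneg {m n : ℕ} (i : ℕ) (X : Matrix (Fin m) (Fin n) ℝ) :
    0 ≤ singularValue i X := by
  unfold singularValue
  split
  · exact Real.sqrt_nonneg _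
  · exact le_rfl

lemma _root_.Monotone.eq_zero_of_card_ne_zero_lt {α : Type*} [PartialOrder α] [Zero α] {m : ℕ}
    {g : Fin m → α} (hg : Monotone g) (hg₀ : 0 ≤ g) {i : Fin m}
    (hcard : Nat.card {j // g j ≠ 0} < m - i) : g i = 0 := by
  classical
  by_contra hi
  have hsub : Finset.Ici i ⊆ Finset.univ.filter (fun j => g j ≠ 0) := fun j hj =>
    Finset.mem_filter.mpr ⟨Finset.mem_univ j, fun hgj =>
      hi (le_antisymm (hgj ▸ hg (Finset.mem_Ici.mp hj)) (hg₀ i))⟩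
  have := Finset.card_le_card hsub
  rw [Fin.card_Ici, ← Fintype.card_subtype, Fintype.card_eq_nat_card] at this
  omega

lemma singularValue_succ_eq_zero_of_rank_le {m n : ℕ} (X : Matrix (Fin m) (Fin n) ℝ) {a : ℕ}
    (ha : X.rank ≤ a) : singularValue (a + 1) X = 0 := by
  unfold singularValue
  split_ifs with h
  -- `Tuple.sort` sorts increasingly, so the `(a + 1)`-th largest singular value comes from the
  -- sorted eigenvalue at index `rev a`, and `a + 1` sorted indices lie at or above `rev a`.
  · set hX := isHermitian_mul_conjTranspose_self X
    have hcard : Nat.card {j // (hX.eigenvalues ∘ Tuple.sort hX.eigenvalues) j ≠ 0} = X.rank := by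
      rw [← rank_self_mul_conjTranspose, hX.rank_eq_card_non_zero_eigs, Fintype.card_eq_nat_card]
      exact Nat.card_congr ((Tuple.sort hX.eigenvalues).subtypeEquiv fun _ => Iff.rfl)
    have hzero := (Tuple.monotone_sort hX.eigenvalues).eq_zero_of_card_ne_zero_lt
      (fun j => (posSemidef_self_mul_conjTranspose X).eigenvalues_nonneg _)
      (i := (⟨a + 1 - 1, by omega⟩ : Fin m).rev) (by simp only [hcard, Fin.val_rev]; omega)
    simp only [sigmaFin, Function.comp_apply] at hzero ⊢
    rw [hzero, Real.sqrt_zero]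
  · rfl

lemma rank_le_l20 {a k : ℕ} (U : Matrix (Fin a) (Fin k) ℝ) : U.rank ≤ l20 U := by
  classical
  let d : Fin k → ℝ := fun j => if (fun i => U i j) = 0 then 0 else 1
  have hU : U * diagonal d = U := by
    ext i j
    rw [mul_diagonal]
    by_cases hj : (fun i => U i j) = 0
    · simp [d, hj, congrFun hj i]
    · simp [d, hj]
  calc U.rank = (U * diagonal d).rank := by rw [hU]
    _ ≤ (diagonal d).rank := rank_mul_le_right _ _
    _ = l20 U := by
      rw [rank_diagonal, Fintype.card_eq_nat_card, l20, ← Nat.card_coe_set_eq]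
      exact Nat.card_congr (Equiv.subtypeEquivRight fun j => by simp [d])

lemma two_mul_rank_mul_transpose_le {a b k : ℕ} (U : Matrix (Fin a) (Fin k) ℝ)
    (V : Matrix (Fin b) (Fin k) ℝ) : 2 * (U * Vᵀ).rank ≤ l20 U + l20 V := by
  have hU := (rank_mul_le_left U Vᵀ).trans (rank_le_l20 U)
  have hV := (rank_mul_le_right U Vᵀ).trans ((rank_transpose V).trans_le (rank_le_l20 V))
  omega

lemma l20_le_of_col_eq_zero {a k : ℕ} {U : Matrix (Fin a) (Fin k) ℝ} {r : ℕ}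
    (hU : ∀ (i : Fin a) (j : Fin k), r ≤ j → U i j = 0) : l20 U ≤ r := by
  calc l20 U ≤ (Set.Iio r).ncard :=
        Set.ncard_le_ncard_of_injOn Fin.val
          (fun j hj => not_le.mp fun hrj => hj (funext fun i => hU i j hrj))
          Fin.val_injective.injOn (Set.finite_Iio r)
    _ = r := Set.ncard_Iio_nat r

lemma sum_castLE_eq_sum_of_eq_zero {M : Type*} [AddCommMonoid M] {κ m : ℕ} (h : κ ≤ m) (F : Fin m → M)
    (hF : ∀ a : Fin m, κ ≤ a → F a = 0) : ∑ j : Fin κ, F (Fin.castLE h j) = ∑ a, F a := by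
  classical
  change ∑ j, F (Fin.castLEEmb h j) = _
  rw [← Finset.sum_map Finset.univ (Fin.castLEEmb h)]
  refine Finset.sum_subset (Finset.subset_univ _) fun a _ ha => hF a (not_lt.mp fun hlt => ha ?_)
  exact Finset.mem_map.mpr ⟨⟨a, hlt⟩, Finset.mem_univ _, rfl⟩

lemma mul_svDiag_mul_transpose_apply {m n p q : ℕ} (hmn : m ≤ n) (U : Matrix (Fin p) (Fin m) ℝ)
    (X : Matrix (Fin m) (Fin n) ℝ) (V : Matrix (Fin q) (Fin n) ℝ) (i : Fin p) (k : Fin q) :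
    (U * svDiag X * Vᵀ) i k =
      ∑ a : Fin m, singularValue (a + 1) X * U i a * V k (Fin.castLE hmn a) := by
  simp only [mul_apply, transpose_apply, Finset.sum_mul]
  rw [Finset.sum_comm]
  refine Finset.sum_congr rfl fun a _ => ?_
  rw [Finset.sum_eq_single (Fin.castLE hmn a)]
  · simp only [svDiag, Fin.val_castLE, if_true]
    ring
  · intro b _ hb
    have hab : (a : ℕ) ≠ b := fun hab => hb (Fin.ext hab.symm)
    simp [svDiag, hab]
  · simp

def svFactor {m n p q : ℕ} (X : Matrix (Fin m) (Fin n) ℝ) (W : Matrix (Fin p) (Fin q) ℝ)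
    {κ : ℕ} (hκ : κ ≤ q) : Matrix (Fin p) (Fin κ) ℝ :=
  fun i j => Real.sqrt (singularValue ((j : ℕ) + 1) X) * W i (Fin.castLE hκ j)

lemma l20_svFactor_le {m n p q κ : ℕ} (X : Matrix (Fin m) (Fin n) ℝ)
    (W : Matrix (Fin p) (Fin q) ℝ) (hκ : κ ≤ q) : l20 (svFactor X W hκ) ≤ X.rank :=
  l20_le_of_col_eq_zero fun i j hj => by
    rw [svFactor, singularValue_succ_eq_zero_of_rank_le X hj, Real.sqrt_zero, zero_mul]

lemma svFactor_mul_svFactor_transpose {m n p q κ : ℕ} (hκm : κ ≤ m) (hmn : m ≤ n)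
    (X : Matrix (Fin m) (Fin n) ℝ) (hX : X.rank ≤ κ)
    (U : Matrix (Fin p) (Fin m) ℝ) (V : Matrix (Fin q) (Fin n) ℝ) :
    svFactor X U hκm * (svFactor X V (hκm.trans hmn))ᵀ = U * svDiag X * Vᵀ := by
  ext i k
  rw [mul_svDiag_mul_transpose_apply hmn, mul_apply, ← sum_castLE_eq_sum_of_eq_zero hκm]
  · refine Finset.sum_congr rfl fun j _ => ?_
    simp only [svFactor, transpose_apply, Fin.castLE_castLE]
    rw [mul_mul_mul_comm, Real.mul_self_sqrt (singularValue_nonneg _ _), Fin.val_castLE,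
      mul_assoc]
  · intro a ha
    rw [singularValue_succ_eq_zero_of_rank_le X (hX.trans ha), zero_mul, zero_mul]

theorem factored_global_min_of_rank_reg_min_general
    {m n : ℕ} (hmn : m ≤ n) (f : Matrix (Fin m) (Fin n) ℝ → ℝ) (ν : ℝ)
    (κ : ℕ) (hκm : κ ≤ m)
    (Xstar : Matrix (Fin m) (Fin n) ℝ) (r : ℕ) (hr : Xstar.rank = r) (hrκ : r ≤ κ)
    (hXmin : ∀ X : Matrix (Fin m) (Fin n) ℝ,
      ν * f Xstar + (Xstar.rank : ℝ) ≤ ν * f X + (X.rank : ℝ))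
    (Ustar : Matrix (Fin m) (Fin m) ℝ) (Vstar : Matrix (Fin n) (Fin n) ℝ)
    (hSVD : Xstar = Ustar * svDiag Xstar * Vstarᵀ)
    (Rstar : Matrix (Fin m) (Fin κ) ℝ) (Lstar : Matrix (Fin n) (Fin κ) ℝ)
    (hR : ∀ (i : Fin m) (j : Fin κ),
      Rstar i j = Real.sqrt (singularValue ((j : ℕ) + 1) Xstar) * Ustar i (Fin.castLE hκm j))
    (hL : ∀ (i : Fin n) (j : Fin κ),
      Lstar i j = Real.sqrt (singularValue ((j : ℕ) + 1) Xstar) *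
        Vstar i (Fin.castLE (hκm.trans hmn) j)) :
    ∀ (U : Matrix (Fin m) (Fin κ) ℝ) (V : Matrix (Fin n) (Fin κ) ℝ),
      ν * f (Rstar * Lstarᵀ) + (1 / 2) * ((l20 Rstar : ℝ) + (l20 Lstar : ℝ)) ≤
        ν * f (U * Vᵀ) + (1 / 2) * ((l20 U : ℝ) + (l20 V : ℝ)) := by
  intro U V
  obtain rfl : Rstar = svFactor Xstar Ustar hκm := Matrix.ext hR
  obtain rfl : Lstar = svFactor Xstar Vstar (hκm.trans hmn) := Matrix.ext hL
  have hRL : svFactor Xstar Ustar hκm * (svFactor Xstar Vstar (hκm.trans hmn))ᵀ = Xstar :=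
    (svFactor_mul_svFactor_transpose hκm hmn Xstar (hr.trans_le hrκ) Ustar Vstar).trans hSVD.symm
  have hRcols : (l20 (svFactor Xstar Ustar hκm) : ℝ) ≤ Xstar.rank := mod_cast l20_svFactor_le ..
  have hLcols : (l20 (svFactor Xstar Vstar (hκm.trans hmn)) : ℝ) ≤ Xstar.rank :=
    mod_cast l20_svFactor_le ..
  have hUV : 2 * ((U * Vᵀ).rank : ℝ) ≤ l20 U + l20 V := mod_cast two_mul_rank_mul_transpose_le U V
  rw [hRL]
  linarith [hXmin (U * Vᵀ)]

/-- a factored pair built from an SVD of a global minimizer of the rank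
regularized problem is a global minimizer of the `ℓ_{2,0}` regularized factorization
(first part of Lemma 3.1). -/
theorem factored_global_min_of_rank_reg_min
    {m n : ℕ} (hmn : m ≤ n) (f : Matrix (Fin m) (Fin n) ℝ → ℝ) (ν : ℝ) (hν : 0 < ν)
    (κ : ℕ) (hκ : 1 ≤ κ) (hκm : κ ≤ m)
    (Xstar : Matrix (Fin m) (Fin n) ℝ) (r : ℕ) (hr : Xstar.rank = r) (hrκ : r ≤ κ)
    (hXmin : ∀ X : Matrix (Fin m) (Fin n) ℝ,
      ν * f Xstar + (Xstar.rank : ℝ) ≤ ν * f X + (X.rank : ℝ))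
    (Ustar : Matrix (Fin m) (Fin m) ℝ) (Vstar : Matrix (Fin n) (Fin n) ℝ)
    (hU : Ustarᵀ * Ustar = 1) (hV : Vstarᵀ * Vstar = 1)
    (hSVD : Xstar = Ustar * svDiag Xstar * Vstarᵀ)
    (Rstar : Matrix (Fin m) (Fin κ) ℝ) (Lstar : Matrix (Fin n) (Fin κ) ℝ)
    (hR : ∀ (i : Fin m) (j : Fin κ),
      Rstar i j = Real.sqrt (singularValue ((j : ℕ) + 1) Xstar) * Ustar i (Fin.castLE hκm j))
    (hL : ∀ (i : Fin n) (j : Fin κ),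
      Lstar i j = Real.sqrt (singularValue ((j : ℕ) + 1) Xstar) *
        Vstar i (Fin.castLE (hκm.trans hmn) j)) :
    ∀ (U : Matrix (Fin m) (Fin κ) ℝ) (V : Matrix (Fin n) (Fin κ) ℝ),
      ν * f (Rstar * Lstarᵀ) + (1 / 2) * ((l20 Rstar : ℝ) + (l20 Lstar : ℝ)) ≤
        ν * f (U * Vᵀ) + (1 / 2) * ((l20 U : ℝ) + (l20 V : ℝ)) :=
  factored_global_min_of_rank_reg_min_general hmn f ν κ hκm Xstar r hr hrκ hXmin Ustar Vstar hSVD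
    Rstar Lstar hR hL

end Paper
end
end

section
/- Let f : ℝ^{m×n} → ℝ be any function, ν, μ > 0, κ a positive integer, φ ∈ 𝓛 with minimizer t*_φ, F(U,V) = ν f(UVᵀ) + (μ/4)‖UᵀU − VᵀV‖_F², and for a matrix Z with κ columns let G(Z) = (‖Z_1‖,…,‖Z_κ‖)ᵀ. Consider problem (P): minimize Ψ(U,V) = F(U,V) + (1/2)(‖U‖_{2,0} + ‖V‖_{2,0}) over ℝ^{m×κ}×ℝ^{n×κ}; and problem (Q): minimize F(U,V) + (1/2)Σ_{i=1}^κ (φ(u_i) + φ(v_i)) over (U,u,V,v) subject to 0 ≤ u ≤ e, ⟨e − u, G(U)⟩ = 0, 0 ≤ v ≤ e, ⟨e − v, G(V)⟩ = 0. Then: (a) if (Ū,V̄) is a global optimal solution of (P), then (Ū,V̄,ū,v̄) with ū_i = 1 when Ū_i ≠ 0 and ū_i = t*_φ when Ū_i = 0, and v̄ defined analogously from V̄, is a global optimal solution of (Q); (b) if (Ū,V̄,ū,v̄) is a global optimal solution of (Q), then (Ū,V̄) is a global optimal solution of (P); and (c) the optimal values of (P) and (Q) are equal. -/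
open scoped BigOperators

noncomputable section

namespace Paper

open Matrix

/-- The objective `Ψ` of the `ℓ_{2,0}`-regularized balanced factorization. -/
def Psi {m n κ : ℕ} (f : Matrix (Fin m) (Fin n) ℝ → ℝ) (ν μ : ℝ)
    (U : Matrix (Fin m) (Fin κ) ℝ) (V : Matrix (Fin n) (Fin κ) ℝ) : ℝ :=
  ν * f (U * Vᵀ) + (μ / 4) * (fnorm (Uᵀ * U - Vᵀ * V)) ^ 2 +
    (1 / 2) * ((l20 U : ℝ) + (l20 V : ℝ))

/-- The smooth part `F` of the factored objective. -/
def Fobj {m n κ : ℕ} (f : Matrix (Fin m) (Fin n) ℝ → ℝ) (ν μ : ℝ)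
    (U : Matrix (Fin m) (Fin κ) ℝ) (V : Matrix (Fin n) (Fin κ) ℝ) : ℝ :=
  ν * f (U * Vᵀ) + (μ / 4) * (fnorm (Uᵀ * U - Vᵀ * V)) ^ 2

/-- Feasibility of a weight vector `w` for a factor `Z` in the MPEC (3.5). -/
def Qfeas {a κ : ℕ} (Z : Matrix (Fin a) (Fin κ) ℝ) (w : Fin κ → ℝ) : Prop :=
  (∀ i, 0 ≤ w i ∧ w i ≤ 1) ∧ (∑ i, (1 - w i) * colNorm Z i) = 0

/-- Objective of the MPEC (3.5). -/
def Qobj {m n κ : ℕ} (L : LFamily) (f : Matrix (Fin m) (Fin n) ℝ → ℝ) (ν μ : ℝ)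
    (U : Matrix (Fin m) (Fin κ) ℝ) (u : Fin κ → ℝ)
    (V : Matrix (Fin n) (Fin κ) ℝ) (v : Fin κ → ℝ) : EReal :=
  ((Fobj f ν μ U V : ℝ) : EReal) +
    ((1 / 2 : ℝ) : EReal) * ∑ i, (L.phi (u i) + L.phi (v i))

/-!
For `Qfeas Z w` the complementarity condition forces `w i = 1` on every nonzero column of `Z`,
where `φ = 1`, while `φ ≥ 0` on `[0,1]`; hence `∑ φ(w i) ≥ ‖Z‖_{2,0}`, so the objective of (Q)
dominates `Ψ` on feasible points. The weights equal to `1` on the nonzero columns and to `t*`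
on the zero ones are feasible and turn this into an equality, and all three claims follow.
-/

theorem EReal.coe_finset_sum {α : Type*} (s : Finset α) (g : α → ℝ) :
    ((∑ i ∈ s, g i : ℝ) : EReal) = ∑ i ∈ s, (g i : EReal) :=
  map_sum (⟨⟨Real.toEReal, EReal.coe_zero⟩, EReal.coe_add⟩ : ℝ →+ EReal) g s

section Weights

variable {a κ : ℕ}

def canonicalWeight (L : LFamily) (Z : Matrix (Fin a) (Fin κ) ℝ) (i : Fin κ) : ℝ :=
  if (fun r => Z r i) = 0 then L.tstar else 1

theorem colNorm_eq_zero_iff (Z : Matrix (Fin a) (Fin κ) ℝ) (i : Fin κ) :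
    colNorm Z i = 0 ↔ (fun r => Z r i) = 0 := by
  rw [colNorm, Real.sqrt_eq_zero (by positivity),
    Finset.sum_eq_zero_iff_of_nonneg fun r _ => sq_nonneg (Z r i), funext_iff]
  simp

theorem Qfeas.eq_one_of_col_ne_zero {Z : Matrix (Fin a) (Fin κ) ℝ} {w : Fin κ → ℝ}
    (h : Qfeas Z w) {i : Fin κ} (hi : (fun r => Z r i) ≠ 0) : w i = 1 := by
  have hterm : (1 - w i) * colNorm Z i = 0 :=
    (Finset.sum_eq_zero_iff_of_nonneg fun j _ =>
      mul_nonneg (sub_nonneg.2 (h.1 j).2) (Real.sqrt_nonneg _)).1 h.2 i (Finset.mem_univ i)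
  have hcol : colNorm Z i ≠ 0 := (colNorm_eq_zero_iff Z i).not.2 hi
  linarith [(mul_eq_zero.1 hterm).resolve_right hcol]

theorem coe_l20_eq_sum (Z : Matrix (Fin a) (Fin κ) ℝ) :
    ((l20 Z : ℝ) : EReal) = ∑ i, if (fun r => Z r i) = 0 then 0 else 1 := by
  classical
  rw [l20, Set.ncard_eq_toFinset_card', Set.toFinset_ofPred, Finset.card_filter,
    Nat.cast_sum, EReal.coe_finset_sum]
  refine Finset.sum_congr rfl fun i _ => ?_
  split_ifs <;> simp_all

theorem Qfeas.coe_l20_le_sum_phi (L : LFamily) {Z : Matrix (Fin a) (Fin κ) ℝ} {w : Fin κ → ℝ}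
    (h : Qfeas Z w) : ((l20 Z : ℝ) : EReal) ≤ ∑ i, L.phi (w i) := by
  rw [coe_l20_eq_sum]
  refine Finset.sum_le_sum fun i _ => ?_
  split_ifs with hi
  · exact L.phi_nonneg (w i) (h.1 i)
  · rw [h.eq_one_of_col_ne_zero hi, L.phi_one]

theorem qfeas_canonicalWeight (L : LFamily) (Z : Matrix (Fin a) (Fin κ) ℝ) :
    Qfeas Z (canonicalWeight L Z) := by
  refine ⟨fun i => ?_, Finset.sum_eq_zero fun i _ => ?_⟩
  · unfold canonicalWeight
    split_ifs
    exacts [L.tstar_mem, ⟨zero_le_one, le_rfl⟩]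
  · unfold canonicalWeight
    split_ifs with hi
    · rw [(colNorm_eq_zero_iff Z i).2 hi, mul_zero]
    · rw [sub_self, zero_mul]

theorem sum_phi_canonicalWeight (L : LFamily) (Z : Matrix (Fin a) (Fin κ) ℝ) :
    ∑ i, L.phi (canonicalWeight L Z i) = ((l20 Z : ℝ) : EReal) := by
  rw [coe_l20_eq_sum]
  refine Finset.sum_congr rfl fun i _ => ?_
  unfold canonicalWeight
  split_ifs
  exacts [L.phi_tstar, L.phi_one]

theorem eq_canonicalWeight {L : LFamily} {Z : Matrix (Fin a) (Fin κ) ℝ} {w : Fin κ → ℝ}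
    (hw : ∀ i : Fin κ, ((fun r => Z r i) ≠ 0 → w i = 1) ∧
      ((fun r => Z r i) = 0 → w i = L.tstar)) :
    w = canonicalWeight L Z := by
  funext i
  unfold canonicalWeight
  split_ifs with hi
  exacts [(hw i).2 hi, (hw i).1 hi]

end Weights

section Objectives

variable {m n κ : ℕ} (L : LFamily) (f : Matrix (Fin m) (Fin n) ℝ → ℝ) (ν μ : ℝ)

theorem Psi_eq_Fobj_add (U : Matrix (Fin m) (Fin κ) ℝ) (V : Matrix (Fin n) (Fin κ) ℝ) :
    Psi f ν μ U V = Fobj f ν μ U V + 1 / 2 * ((l20 U : ℝ) + (l20 V : ℝ)) :=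
  rfl

theorem Qobj_eq_Fobj_add (U : Matrix (Fin m) (Fin κ) ℝ) (u : Fin κ → ℝ)
    (V : Matrix (Fin n) (Fin κ) ℝ) (v : Fin κ → ℝ) :
    Qobj L f ν μ U u V v = (Fobj f ν μ U V : EReal) +
      ((1 / 2 : ℝ) : EReal) * (∑ i, L.phi (u i) + ∑ i, L.phi (v i)) := by
  rw [Qobj, Finset.sum_add_distrib]

theorem Psi_le_Qobj {U : Matrix (Fin m) (Fin κ) ℝ} {u : Fin κ → ℝ}
    {V : Matrix (Fin n) (Fin κ) ℝ} {v : Fin κ → ℝ} (hU : Qfeas U u) (hV : Qfeas V v) :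
    (Psi f ν μ U V : EReal) ≤ Qobj L f ν μ U u V v := by
  rw [Psi_eq_Fobj_add, Qobj_eq_Fobj_add, EReal.coe_add, EReal.coe_mul, EReal.coe_add]
  exact add_le_add le_rfl <| mul_le_mul_of_nonneg_left
    (add_le_add (hU.coe_l20_le_sum_phi L) (hV.coe_l20_le_sum_phi L)) (by norm_num)

theorem Qobj_canonicalWeight (U : Matrix (Fin m) (Fin κ) ℝ) (V : Matrix (Fin n) (Fin κ) ℝ) :
    Qobj L f ν μ U (canonicalWeight L U) V (canonicalWeight L V) = (Psi f ν μ U V : EReal) := by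
  rw [Qobj_eq_Fobj_add, sum_phi_canonicalWeight, sum_phi_canonicalWeight, Psi_eq_Fobj_add,
    EReal.coe_add, EReal.coe_mul, EReal.coe_add]

end Objectives

theorem MPEC_equivalence_general
    {m n : ℕ} (f : Matrix (Fin m) (Fin n) ℝ → ℝ) (ν μ : ℝ)
    (κ : ℕ) (L : LFamily) :
    (∀ (Ubar : Matrix (Fin m) (Fin κ) ℝ) (Vbar : Matrix (Fin n) (Fin κ) ℝ)
        (ubar vbar : Fin κ → ℝ),
      (∀ (U : Matrix (Fin m) (Fin κ) ℝ) (V : Matrix (Fin n) (Fin κ) ℝ),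
        Psi f ν μ Ubar Vbar ≤ Psi f ν μ U V) →
      (∀ i : Fin κ, ((fun r => Ubar r i) ≠ 0 → ubar i = 1) ∧
        ((fun r => Ubar r i) = 0 → ubar i = L.tstar)) →
      (∀ i : Fin κ, ((fun r => Vbar r i) ≠ 0 → vbar i = 1) ∧
        ((fun r => Vbar r i) = 0 → vbar i = L.tstar)) →
      (Qfeas Ubar ubar ∧ Qfeas Vbar vbar ∧
        ∀ (U : Matrix (Fin m) (Fin κ) ℝ) (u : Fin κ → ℝ)
          (V : Matrix (Fin n) (Fin κ) ℝ) (v : Fin κ → ℝ),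
          Qfeas U u → Qfeas V v →
          Qobj L f ν μ Ubar ubar Vbar vbar ≤ Qobj L f ν μ U u V v)) ∧
    (∀ (Ubar : Matrix (Fin m) (Fin κ) ℝ) (ubar : Fin κ → ℝ)
        (Vbar : Matrix (Fin n) (Fin κ) ℝ) (vbar : Fin κ → ℝ),
      Qfeas Ubar ubar → Qfeas Vbar vbar →
      (∀ (U : Matrix (Fin m) (Fin κ) ℝ) (u : Fin κ → ℝ)
        (V : Matrix (Fin n) (Fin κ) ℝ) (v : Fin κ → ℝ),
        Qfeas U u → Qfeas V v →
        Qobj L f ν μ Ubar ubar Vbar vbar ≤ Qobj L f ν μ U u V v) →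
      ∀ (U : Matrix (Fin m) (Fin κ) ℝ) (V : Matrix (Fin n) (Fin κ) ℝ),
        Psi f ν μ Ubar Vbar ≤ Psi f ν μ U V) ∧
    (sInf {y : EReal | ∃ (U : Matrix (Fin m) (Fin κ) ℝ) (V : Matrix (Fin n) (Fin κ) ℝ),
        y = ((Psi f ν μ U V : ℝ) : EReal)} =
      sInf {y : EReal | ∃ (U : Matrix (Fin m) (Fin κ) ℝ) (u : Fin κ → ℝ)
          (V : Matrix (Fin n) (Fin κ) ℝ) (v : Fin κ → ℝ),
        Qfeas U u ∧ Qfeas V v ∧ y = Qobj L f ν μ U u V v}) := by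
  refine ⟨?_, ?_, ?_⟩
  · rintro Ubar Vbar ubar vbar hmin hu hv
    rw [eq_canonicalWeight hu, eq_canonicalWeight hv]
    refine ⟨qfeas_canonicalWeight L Ubar, qfeas_canonicalWeight L Vbar,
      fun U u V v hU hV => ?_⟩
    calc Qobj L f ν μ Ubar (canonicalWeight L Ubar) Vbar (canonicalWeight L Vbar)
        = (Psi f ν μ Ubar Vbar : EReal) := Qobj_canonicalWeight L f ν μ Ubar Vbar
      _ ≤ (Psi f ν μ U V : EReal) := EReal.coe_le_coe_iff.2 (hmin U V)
      _ ≤ Qobj L f ν μ U u V v := Psi_le_Qobj L f ν μ hU hV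
  · intro Ubar ubar Vbar vbar hUbar hVbar hmin U V
    refine EReal.coe_le_coe_iff.1 ?_
    calc (Psi f ν μ Ubar Vbar : EReal)
        ≤ Qobj L f ν μ Ubar ubar Vbar vbar := Psi_le_Qobj L f ν μ hUbar hVbar
      _ ≤ Qobj L f ν μ U (canonicalWeight L U) V (canonicalWeight L V) :=
          hmin _ _ _ _ (qfeas_canonicalWeight L U) (qfeas_canonicalWeight L V)
      _ = (Psi f ν μ U V : EReal) := Qobj_canonicalWeight L f ν μ U V
  · refine le_antisymm (le_sInf ?_) (le_sInf ?_)
    · rintro _ ⟨U, u, V, v, hU, hV, rfl⟩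
      exact le_trans (sInf_le ⟨U, V, rfl⟩) (Psi_le_Qobj L f ν μ hU hV)
    · rintro _ ⟨U, V, rfl⟩
      exact sInf_le ⟨U, canonicalWeight L U, V, canonicalWeight L V,
        qfeas_canonicalWeight L U, qfeas_canonicalWeight L V,
        (Qobj_canonicalWeight L f ν μ U V).symm⟩

/-- equivalence of the `ℓ_{2,0}` regularized factorization (P) and its
MPEC reformulation (Q). -/
theorem MPEC_equivalence
    {m n : ℕ} (f : Matrix (Fin m) (Fin n) ℝ → ℝ) (ν μ : ℝ)
    (hν : 0 < ν) (hμ : 0 < μ) (κ : ℕ) (hκ : 1 ≤ κ) (L : LFamily) :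
    (∀ (Ubar : Matrix (Fin m) (Fin κ) ℝ) (Vbar : Matrix (Fin n) (Fin κ) ℝ)
        (ubar vbar : Fin κ → ℝ),
      (∀ (U : Matrix (Fin m) (Fin κ) ℝ) (V : Matrix (Fin n) (Fin κ) ℝ),
        Psi f ν μ Ubar Vbar ≤ Psi f ν μ U V) →
      (∀ i : Fin κ, ((fun r => Ubar r i) ≠ 0 → ubar i = 1) ∧
        ((fun r => Ubar r i) = 0 → ubar i = L.tstar)) →
      (∀ i : Fin κ, ((fun r => Vbar r i) ≠ 0 → vbar i = 1) ∧
        ((fun r => Vbar r i) = 0 → vbar i = L.tstar)) →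
      (Qfeas Ubar ubar ∧ Qfeas Vbar vbar ∧
        ∀ (U : Matrix (Fin m) (Fin κ) ℝ) (u : Fin κ → ℝ)
          (V : Matrix (Fin n) (Fin κ) ℝ) (v : Fin κ → ℝ),
          Qfeas U u → Qfeas V v →
          Qobj L f ν μ Ubar ubar Vbar vbar ≤ Qobj L f ν μ U u V v)) ∧
    (∀ (Ubar : Matrix (Fin m) (Fin κ) ℝ) (ubar : Fin κ → ℝ)
        (Vbar : Matrix (Fin n) (Fin κ) ℝ) (vbar : Fin κ → ℝ),
      Qfeas Ubar ubar → Qfeas Vbar vbar →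
      (∀ (U : Matrix (Fin m) (Fin κ) ℝ) (u : Fin κ → ℝ)
        (V : Matrix (Fin n) (Fin κ) ℝ) (v : Fin κ → ℝ),
        Qfeas U u → Qfeas V v →
        Qobj L f ν μ Ubar ubar Vbar vbar ≤ Qobj L f ν μ U u V v) →
      ∀ (U : Matrix (Fin m) (Fin κ) ℝ) (V : Matrix (Fin n) (Fin κ) ℝ),
        Psi f ν μ Ubar Vbar ≤ Psi f ν μ U V) ∧
    (sInf {y : EReal | ∃ (U : Matrix (Fin m) (Fin κ) ℝ) (V : Matrix (Fin n) (Fin κ) ℝ),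
        y = ((Psi f ν μ U V : ℝ) : EReal)} =
      sInf {y : EReal | ∃ (U : Matrix (Fin m) (Fin κ) ℝ) (u : Fin κ → ℝ)
          (V : Matrix (Fin n) (Fin κ) ℝ) (v : Fin κ → ℝ),
        Qfeas U u ∧ Qfeas V v ∧ y = Qobj L f ν μ U u V v}) :=
  MPEC_equivalence_general f ν μ κ L

end Paper
end
end

section
/- Let A : ℝ^{m×n} → ℝ^p be a linear map, let M ∈ ℝ^{m×n} have rank r ≥ 1 with σ_i = σ_i(M), set f(X) = (1/2)‖A(X) − A(M)‖², let ν, μ > 0 and κ a positive integer, and let Ψ(U,V) = ν f(UVᵀ) + (μ/4)‖UᵀU − VᵀV‖_F² + (1/2)(‖U‖_{2,0} + ‖V‖_{2,0}). Suppose 𝒳* ∩ Ω_κ ≠ ∅ and that α = λ_{2r,min}(A*A) satisfies α > 2/(ν σ_r²). Fix (Ū,V̄) ∈ 𝒲*. Then for every (U,V) ∈ ℝ^{m×κ}×ℝ^{n×κ} with √(‖U−Ū‖_F² + ‖V−V̄‖_F²) < √σ_r/4 and 0 < Ψ(U,V) − Ψ(Ū,V̄) < 1/2, the four sets of nonzero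 column indices coincide: {j : Ū_j ≠ 0} = {j : V̄_j ≠ 0} = {j : U_j ≠ 0} = {j : V_j ≠ 0}. -/
open scoped BigOperators

noncomputable section

namespace Paper

open Matrix

/-!
Comparing the minimizer `Ū V̄ᵀ` with `M` itself, the Eckart–Young bound and the restricted
eigenvalue `lamMin A (2r)` force `Ū V̄ᵀ = M`. For this balanced factorization the nonzero
eigenvalues of `ŪᵀŪ = V̄ᵀV̄` are the nonzero singular values of `M`, and `‖Ū‖_{2,0} = rank Ū`
makes the nonzero columns of `Ū` independent, so each has squared norm at least `σ_r`. Hence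
`Ū` and `V̄` have the same nonzero columns, and a pair `(U, V)` within distance `√σ_r / 4` keeps
all of them. Since `Ψ(Ū, V̄) = r`, the bound `Ψ(U, V) < r + 1/2` leaves room for at most `2r`
nonzero columns in `U` and `V` together, so nothing else is nonzero.
-/

theorem vnorm_smul {p : ℕ} (c : ℝ) (y : Fin p → ℝ) : vnorm (c • y) = |c| * vnorm y := by
  simp only [vnorm, Pi.smul_apply, smul_eq_mul, mul_pow, ← Finset.mul_sum]
  rw [Real.sqrt_mul (sq_nonneg c), Real.sqrt_sq_eq_abs]

theorem sum_sq_eq_zero_iff {m : ℕ} {v : Fin m → ℝ} : ∑ i, v i ^ 2 = 0 ↔ v = 0 := by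
  simp [Finset.sum_eq_zero_iff_of_nonneg, sq_nonneg, funext_iff]

theorem fnorm_sq {m n : ℕ} (X : Matrix (Fin m) (Fin n) ℝ) :
    fnorm X ^ 2 = ∑ i, ∑ j, X i j ^ 2 :=
  Real.sq_sqrt (by positivity)

theorem fnorm_eq_zero_iff {m n : ℕ} {X : Matrix (Fin m) (Fin n) ℝ} : fnorm X = 0 ↔ X = 0 := by
  rw [fnorm, Real.sqrt_eq_zero (by positivity),
    Finset.sum_eq_zero_iff_of_nonneg fun _ _ => by positivity, ← Matrix.ext_iff]
  exact forall_congr' fun i => by simp [sum_sq_eq_zero_iff, funext_iff]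

theorem fnorm_smul {m n : ℕ} (c : ℝ) (X : Matrix (Fin m) (Fin n) ℝ) :
    fnorm (c • X) = |c| * fnorm X := by
  simp only [fnorm, Matrix.smul_apply, smul_eq_mul, mul_pow, ← Finset.mul_sum]
  rw [Real.sqrt_mul (sq_nonneg c), Real.sqrt_sq_eq_abs]

theorem fnorm_transpose {m n : ℕ} (X : Matrix (Fin m) (Fin n) ℝ) : fnorm Xᵀ = fnorm X := by
  rw [fnorm, fnorm, Finset.sum_comm]
  rfl

theorem sum_sq_col_le_fnorm_sq {m n : ℕ} (X : Matrix (Fin m) (Fin n) ℝ) (j : Fin n) :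
    ∑ i, X i j ^ 2 ≤ fnorm X ^ 2 := by
  rw [fnorm_sq, Finset.sum_comm]
  exact Finset.single_le_sum (f := fun j => ∑ i, X i j ^ 2) (fun _ _ => by positivity)
    (Finset.mem_univ j)

theorem lamMin_mul_fnorm_sq_le {m n p : ℕ} (A : Matrix (Fin m) (Fin n) ℝ →ₗ[ℝ] (Fin p → ℝ))
    {k : ℕ} {X : Matrix (Fin m) (Fin n) ℝ} (hX : X.rank ≤ k) :
    lamMin A k * fnorm X ^ 2 ≤ vnorm (A X) ^ 2 := by
  rcases eq_or_ne X 0 with rfl | hX0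
  · simp [fnorm_eq_zero_iff.2 rfl, sq_nonneg]
  set c := fnorm X
  have hc : 0 < c := (Real.sqrt_nonneg _).lt_of_ne (Ne.symm (fnorm_eq_zero_iff.not.2 hX0))
  have hle : lamMin A k ≤ vnorm (A (c⁻¹ • X)) ^ 2 := by
    refine csInf_le ⟨0, ?_⟩ ⟨c⁻¹ • X, ?_, ?_, rfl⟩
    · rintro t ⟨Z, -, -, rfl⟩
      positivity
    · rwa [Matrix.rank_smul_of_mem_nonZeroDivisors _
        (mem_nonZeroDivisors_of_ne_zero (inv_ne_zero hc.ne'))]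
    · rw [fnorm_smul, abs_of_pos (inv_pos.2 hc), inv_mul_cancel₀ hc.ne']
  rw [map_smul, vnorm_smul, abs_of_pos (inv_pos.2 hc), mul_pow, inv_pow] at hle
  calc lamMin A k * c ^ 2 ≤ (c ^ 2)⁻¹ * vnorm (A X) ^ 2 * c ^ 2 := by gcongr
    _ = vnorm (A X) ^ 2 := by field_simp

end Paper

namespace Matrix

theorem rank_sub_le {K m n : Type*} [Field K] [Fintype n] (X Y : Matrix m n K) :
    (X - Y).rank ≤ X.rank + Y.rank := by
  have hle : LinearMap.range (X - Y).mulVecLin ≤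
      LinearMap.range X.mulVecLin ⊔ LinearMap.range Y.mulVecLin := by
    rintro _ ⟨v, rfl⟩
    rw [mulVecLin_apply, sub_mulVec]
    exact Submodule.sub_mem_sup ⟨v, rfl⟩ ⟨v, rfl⟩
  exact (Submodule.finrank_mono hle).trans (Submodule.finrank_add_le_finrank_add_finrank _ _)

theorem mem_spectrum_iff_exists_mulVec_eq_smul {K n : Type*} [Field K] [Fintype n]
    [DecidableEq n] {S : Matrix n n K} {μ : K} :
    μ ∈ spectrum K S ↔ ∃ v, v ≠ 0 ∧ S *ᵥ v = μ • v := by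
  rw [← spectrum_toLin', ← Module.End.hasEigenvalue_iff_mem_spectrum]
  constructor
  · intro h
    obtain ⟨v, hv⟩ := h.exists_hasEigenvector
    exact ⟨v, hv.2, by simpa using hv.apply_eq_smul⟩
  · rintro ⟨v, hv, h⟩
    exact Module.End.hasEigenvalue_of_hasEigenvector
      ⟨Module.End.mem_eigenspace_iff.2 (by simpa using h), hv⟩

theorem isHermitian_transpose_mul_self {m n : Type*} [Fintype m] (M : Matrix m n ℝ) :
    (Mᵀ * M).IsHermitian := by
  simpa [conjTranspose_eq_transpose_of_trivial] using isHermitian_conjTranspose_mul_self M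

theorem transpose_mul_self_apply_self {m n : Type*} [Fintype m] (M : Matrix m n ℝ) (j : n) :
    (Mᵀ * M) j j = ∑ i, M i j ^ 2 := by
  simp [mul_apply, sq]

section Real

variable {l m n : Type*} [Fintype l] [Fintype m] [Fintype n]

theorem dotProduct_self_pos {v : n → ℝ} (hv : v ≠ 0) : 0 < v ⬝ᵥ v :=
  (Fintype.sum_nonneg fun i => mul_self_nonneg (v i)).lt_of_ne
    (Ne.symm (dotProduct_self_eq_zero.not.2 hv))

theorem dotProduct_transpose_mul_self_mulVec (M : Matrix m n ℝ) (x : n → ℝ) :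
    x ⬝ᵥ (Mᵀ * M) *ᵥ x = M *ᵥ x ⬝ᵥ M *ᵥ x := by
  rw [← mulVec_mulVec, dotProduct_mulVec, vecMul_transpose]

theorem mulVec_eq_zero_of_transpose_mul_self_mulVec_eq_zero {M : Matrix m n ℝ} {v : n → ℝ}
    (hv : (Mᵀ * M) *ᵥ v = 0) : M *ᵥ v = 0 := by
  simpa [dotProduct_transpose_mul_self_mulVec] using congrArg (v ⬝ᵥ ·) hv

theorem IsHermitian.mul_dotProduct_self_le [DecidableEq n] {S : Matrix n n ℝ}
    (hS : S.IsHermitian) {s : ℝ} (hs : ∀ μ ∈ spectrum ℝ S, μ ≠ 0 → s ≤ μ) {x : n → ℝ}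
    (hx : ∀ v, S *ᵥ v = 0 → x ⬝ᵥ v = 0) :
    s * (x ⬝ᵥ x) ≤ x ⬝ᵥ S *ᵥ x := by
  set b := hS.eigenvectorBasis
  have parseval : ∀ y, x ⬝ᵥ y = ∑ i, (b i ⬝ᵥ x) * (b i ⬝ᵥ y) := by
    intro y
    have := b.sum_inner_mul_inner (WithLp.toLp 2 x) (WithLp.toLp 2 y)
    simpa [EuclideanSpace.inner_eq_star_dotProduct, dotProduct_comm] using this.symm
  have hcoef : ∀ i, b i ⬝ᵥ S *ᵥ x = hS.eigenvalues i * (b i ⬝ᵥ x) := by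
    intro i
    rw [dotProduct_mulVec, ← mulVec_transpose, ← conjTranspose_eq_transpose_of_trivial, hS.eq,
      hS.mulVec_eigenvectorBasis, smul_dotProduct, smul_eq_mul]
  rw [parseval, parseval, Finset.mul_sum]
  refine Finset.sum_le_sum fun i _ => ?_
  rw [hcoef]
  by_cases h0 : hS.eigenvalues i = 0
  · have : b i ⬝ᵥ x = 0 := by
      rw [dotProduct_comm]
      exact hx _ (by rw [hS.mulVec_eigenvectorBasis, h0, zero_smul])
    simp [this]
  · have := hs _ (hS.eigenvalues_mem_spectrum_real i) h0
    nlinarith [mul_self_nonneg (b i ⬝ᵥ x)]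

theorem rank_add_finrank_ker_toEuclideanLin [DecidableEq n] (M : Matrix m n ℝ) :
    M.rank + Module.finrank ℝ (LinearMap.ker (toEuclideanLin M)) = Fintype.card n := by
  rw [rank_eq_finrank_range_toLin M (PiLp.basisFun 2 ℝ m) (PiLp.basisFun 2 ℝ n)]
  exact (LinearMap.finrank_range_add_finrank_ker _).trans finrank_euclideanSpace

theorem rank_sub_rank_le_finrank_orthogonal_ker_inf_ker [DecidableEq n] (M Y : Matrix m n ℝ) :
    M.rank - Y.rank ≤ Module.finrank ℝ
      ↥((LinearMap.ker (toEuclideanLin M))ᗮ ⊓ LinearMap.ker (toEuclideanLin Y)) := by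
  have := Submodule.finrank_sup_add_finrank_inf_eq
    (LinearMap.ker (toEuclideanLin M))ᗮ (LinearMap.ker (toEuclideanLin Y))
  have := Submodule.finrank_le
    ((LinearMap.ker (toEuclideanLin M))ᗮ ⊔ LinearMap.ker (toEuclideanLin Y))
  have := (LinearMap.ker (toEuclideanLin M)).finrank_add_finrank_orthogonal
  have := rank_add_finrank_ker_toEuclideanLin M
  have := rank_add_finrank_ker_toEuclideanLin Y
  simp only [finrank_euclideanSpace] at *
  omega

theorem mul_dotProduct_self_le_of_mem_orthogonal_ker [DecidableEq n] {M : Matrix m n ℝ} {s : ℝ}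
    (hs : ∀ μ ∈ spectrum ℝ (Mᵀ * M), μ ≠ 0 → s ≤ μ) {x : EuclideanSpace ℝ n}
    (hx : x ∈ (LinearMap.ker (toEuclideanLin M))ᗮ) :
    s * (x ⬝ᵥ x) ≤ M *ᵥ x ⬝ᵥ M *ᵥ x := by
  rw [← dotProduct_transpose_mul_self_mulVec]
  refine (isHermitian_transpose_mul_self M).mul_dotProduct_self_le hs fun v hv => ?_
  have hMv : WithLp.toLp 2 v ∈ LinearMap.ker (toEuclideanLin M) := by
    simp [toLpLin_apply, mulVec_eq_zero_of_transpose_mul_self_mulVec_eq_zero hv]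
  simpa [EuclideanSpace.inner_eq_star_dotProduct, dotProduct_comm] using
    Submodule.inner_right_of_mem_orthogonal hMv hx

theorem le_of_mem_spectrum_of_balanced [DecidableEq l] [DecidableEq m] {U : Matrix m l ℝ}
    {V : Matrix n l ℝ} (hbal : Uᵀ * U = Vᵀ * V) {s : ℝ} (hs0 : 0 ≤ s)
    (hs : ∀ μ ∈ spectrum ℝ (U * Vᵀ * (U * Vᵀ)ᵀ), μ ≠ 0 → s ^ 2 ≤ μ) {μ : ℝ}
    (hμ : μ ∈ spectrum ℝ (Uᵀ * U)) (hμ0 : μ ≠ 0) : s ≤ μ := by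
  obtain ⟨v, hv, hGv⟩ := mem_spectrum_iff_exists_mulVec_eq_smul.1 hμ
  have hUv : U *ᵥ v ≠ 0 := fun h => hv <| (smul_eq_zero.1 <| by
    rw [← hGv, ← mulVec_mulVec, h, mulVec_zero]).resolve_left hμ0
  have hμpos : 0 < μ := by
    have h := dotProduct_transpose_mul_self_mulVec U v
    rw [hGv, dotProduct_smul, smul_eq_mul] at h
    exact pos_of_mul_pos_left (h ▸ dotProduct_self_pos hUv) (dotProduct_self_pos hv).le
  -- `U Vᵀ (U Vᵀ)ᵀ = U (Vᵀ V) Uᵀ = U (Uᵀ U) Uᵀ`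
  have heig : (U * Vᵀ * (U * Vᵀ)ᵀ) *ᵥ (U *ᵥ v) = μ ^ 2 • (U *ᵥ v) := by
    rw [transpose_mul, transpose_transpose, Matrix.mul_assoc, ← Matrix.mul_assoc Vᵀ, ← hbal,
      ← mulVec_mulVec, ← mulVec_mulVec, mulVec_mulVec v, hGv, mulVec_smul, hGv, mulVec_smul,
      mulVec_smul, smul_smul, sq]
  have := hs _ (mem_spectrum_iff_exists_mulVec_eq_smul.2 ⟨_, hUv, heig⟩) (pow_ne_zero 2 hμ0)
  exact (pow_le_pow_iff_left₀ hs0 hμpos.le two_ne_zero).1 this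

end Real

end Matrix

theorem Fin.ne_zero_iff_le_of_monotone {m r : ℕ} {g : Fin m → ℝ} (hg : Monotone g)
    (h0 : ∀ j, 0 ≤ g j) (hcard : (Finset.univ.filter fun j => g j ≠ 0).card = r) (j : Fin m) :
    g j ≠ 0 ↔ m - r ≤ (j : ℕ) := by
  have hj := j.2
  constructor
  · intro hgj
    have hsub : Finset.Ici j ⊆ Finset.univ.filter fun j => g j ≠ 0 := fun k hk => by
      simp only [Finset.mem_filter, Finset.mem_univ, true_and]
      exact (((h0 j).lt_of_ne (Ne.symm hgj)).trans_le (hg (Finset.mem_Ici.1 hk))).ne'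
    have := Finset.card_le_card hsub
    rw [Fin.card_Ici, hcard] at this
    omega
  · intro hjr hgj
    have hsub : (Finset.univ.filter fun j => g j ≠ 0) ⊆ Finset.Ioi j := fun k hk => by
      simp only [Finset.mem_filter, Finset.mem_univ, true_and] at hk
      by_contra hkj
      exact hk (le_antisymm (hgj ▸ hg (not_lt.1 (Finset.mem_Ioi.not.1 hkj))) (h0 k))
    have := Finset.card_le_card hsub
    rw [Fin.card_Ioi, hcard] at this
    omega

theorem Set.eq_and_eq_of_subset_of_ncard_add_le {α : Type*} [Finite α] {a b c d : Set α}
    (hac : a ⊆ c) (hbd : b ⊆ d) (h : c.ncard + d.ncard ≤ a.ncard + b.ncard) :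
    a = c ∧ b = d := by
  have := Set.ncard_le_ncard hac
  have := Set.ncard_le_ncard hbd
  exact ⟨Set.eq_of_subset_of_ncard_le hac (by omega), Set.eq_of_subset_of_ncard_le hbd (by omega)⟩

namespace Paper

open Matrix

theorem sum_dotProduct_mulVec_le_fnorm_sq {m n : ℕ} (B : Matrix (Fin m) (Fin n) ℝ) {ι : Type*}
    [Fintype ι] {w : ι → EuclideanSpace ℝ (Fin n)} (hw : Orthonormal ℝ w) :
    ∑ l, B *ᵥ w l ⬝ᵥ B *ᵥ w l ≤ fnorm B ^ 2 := by
  have bessel : ∀ i, ∑ l, (B i ⬝ᵥ w l) ^ 2 ≤ ∑ j, B i j ^ 2 := by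
    intro i
    simpa [EuclideanSpace.inner_eq_star_dotProduct, EuclideanSpace.norm_sq_eq] using
      hw.sum_inner_products_le (x := WithLp.toLp 2 (B i)) (s := Finset.univ)
  calc ∑ l, B *ᵥ w l ⬝ᵥ B *ᵥ w l = ∑ i, ∑ l, (B i ⬝ᵥ w l) ^ 2 := by
        simp only [dotProduct, sq]
        exact Finset.sum_comm
    _ ≤ fnorm B ^ 2 := by
        rw [fnorm_sq]
        exact Finset.sum_le_sum fun i _ => bessel i

/-- Eckart–Young. -/
theorem rank_sub_rank_mul_le_fnorm_sub_sq {m n : ℕ} {M : Matrix (Fin m) (Fin n) ℝ} {s : ℝ}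
    (hs0 : 0 ≤ s) (hs : ∀ μ ∈ spectrum ℝ (Mᵀ * M), μ ≠ 0 → s ≤ μ)
    (Y : Matrix (Fin m) (Fin n) ℝ) :
    ((M.rank - Y.rank : ℕ) : ℝ) * s ≤ fnorm (Y - M) ^ 2 := by
  have hdim := rank_sub_rank_le_finrank_orthogonal_ker_inf_ker M Y
  set W := (LinearMap.ker (toEuclideanLin M))ᗮ ⊓ LinearMap.ker (toEuclideanLin Y)
  set b := stdOrthonormalBasis ℝ W
  have hw : Orthonormal ℝ fun l => (b l : EuclideanSpace ℝ (Fin n)) :=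
    b.orthonormal.comp_linearIsometry W.subtypeₗᵢ
  have hunit : ∀ l, (b l : EuclideanSpace ℝ (Fin n)) ⬝ᵥ (b l : EuclideanSpace ℝ (Fin n)) = 1 := by
    intro l
    have := real_inner_self_eq_norm_sq (b l : EuclideanSpace ℝ (Fin n))
    rw [hw.1 l, one_pow, EuclideanSpace.inner_eq_star_dotProduct] at this
    simpa using this
  have hcol : ∀ l, (Y - M) *ᵥ (b l : EuclideanSpace ℝ (Fin n)) = -(M *ᵥ b l) := by
    intro l
    have hY : toEuclideanLin Y (b l) = 0 := (b l).2.2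
    rw [sub_mulVec, show Y *ᵥ (b l : EuclideanSpace ℝ (Fin n)) = 0 from
      congrArg WithLp.ofLp hY, zero_sub]
  calc ((M.rank - Y.rank : ℕ) : ℝ) * s ≤ Module.finrank ℝ W * s := by gcongr
    _ = ∑ l, s * ((b l : EuclideanSpace ℝ (Fin n)) ⬝ᵥ (b l : EuclideanSpace ℝ (Fin n))) := by
        simp [hunit, mul_comm]
    _ ≤ ∑ l, (Y - M) *ᵥ (b l : EuclideanSpace ℝ (Fin n)) ⬝ᵥ (Y - M) *ᵥ b l := by
        refine Finset.sum_le_sum fun l _ => ?_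
        rw [hcol, neg_dotProduct_neg]
        exact mul_dotProduct_self_le_of_mem_orthogonal_ker hs (b l).2.1
    _ ≤ fnorm (Y - M) ^ 2 := sum_dotProduct_mulVec_le_fnorm_sq _ hw

theorem singularValue_pos_and_sq_le {m n r : ℕ} {M : Matrix (Fin m) (Fin n) ℝ}
    (hr : M.rank = r) (hr1 : 1 ≤ r) :
    0 < singularValue r M ∧ ∀ μ ∈ spectrum ℝ (M * Mᵀ), μ ≠ 0 → singularValue r M ^ 2 ≤ μ := by
  classical
  have hS := isHermitian_mul_conjTranspose_self M
  let σ := Tuple.sort hS.eigenvalues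
  have hrm : r ≤ m := hr ▸ M.rank_le_height
  have hg0 : ∀ j, 0 ≤ hS.eigenvalues (σ j) :=
    fun j => (posSemidef_self_mul_conjTranspose M).eigenvalues_nonneg _
  have hcard : (Finset.univ.filter fun j => hS.eigenvalues (σ j) ≠ 0).card = r := by
    rw [← hr, ← rank_self_mul_conjTranspose, hS.rank_eq_card_non_zero_eigs,
      Fintype.card_subtype, Finset.card_filter, Finset.card_filter]
    exact Equiv.sum_comp σ (fun i => if hS.eigenvalues i ≠ 0 then 1 else 0)
  have hmono : Monotone fun j => hS.eigenvalues (σ j) := Tuple.monotone_sort hS.eigenvalues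
  have key := Fin.ne_zero_iff_le_of_monotone hmono hg0 hcard
  set j₀ : Fin m := ⟨m - r, by omega⟩
  have hsv : singularValue r M ^ 2 = hS.eigenvalues (σ j₀) := by
    have hrev : (⟨r - 1, by omega⟩ : Fin m).rev = j₀ := Fin.ext (by simp [j₀]; omega)
    rw [singularValue, dif_pos ⟨hr1, hrm⟩, sigmaFin, hrev]
    exact Real.sq_sqrt (hg0 j₀)
  refine ⟨?_, fun μ hμ hμ0 => ?_⟩
  · have hsv0 : 0 ≤ singularValue r M := by
      rw [singularValue, dif_pos ⟨hr1, hrm⟩]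
      exact Real.sqrt_nonneg _
    refine hsv0.lt_of_ne fun h => (key j₀).2 le_rfl ?_
    rw [← hsv, ← h, sq, zero_mul]
  · rw [← conjTranspose_eq_transpose_of_trivial, hS.spectrum_real_eq_range_eigenvalues] at hμ
    obtain ⟨i, rfl⟩ := hμ
    have hi : hS.eigenvalues (σ (σ.symm i)) = hS.eigenvalues i := by rw [Equiv.apply_symm_apply]
    rw [hsv, ← hi]
    exact hmono (Fin.le_iff_val_le_val.2 ((key _).1 (hi ▸ hμ0)))

/-- Each unit of rank deficit of `X` costs at least `σ_r²` in `‖X - M‖²` (Eckart–Young), which the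
restricted eigenvalue `lamMin A (2r)` turns into a loss in `f` larger than the gain in rank. -/
theorem eq_of_add_rank_le {m n p : ℕ} (A : Matrix (Fin m) (Fin n) ℝ →ₗ[ℝ] (Fin p → ℝ))
    {M : Matrix (Fin m) (Fin n) ℝ} {r : ℕ} (hr : M.rank = r) (hr1 : 1 ≤ r) {ν : ℝ} (hν : 0 < ν)
    (hα : 2 / (ν * singularValue r M ^ 2) < lamMin A (2 * r)) {X : Matrix (Fin m) (Fin n) ℝ}
    (hX : ν * ((1 / 2) * vnorm (A X - A M) ^ 2) + X.rank ≤ r) : X = M := by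
  obtain ⟨hs, hsM⟩ := singularValue_pos_and_sq_le hr hr1
  set s := singularValue r M
  set L := lamMin A (2 * r)
  have hL : 0 < L := lt_of_le_of_lt (by positivity) hα
  have hνLs : 2 < ν * L * s ^ 2 := by
    rw [div_lt_iff₀ (by positivity)] at hα
    linarith
  have hXr : X.rank ≤ r := by
    have : (X.rank : ℝ) ≤ r := by nlinarith [sq_nonneg (vnorm (A X - A M))]
    exact_mod_cast this
  -- applied to the transposes, whose Gram matrix is `M Mᵀ`
  have hEY := rank_sub_rank_mul_le_fnorm_sub_sq (M := Mᵀ) (sq_nonneg s)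
    (by simpa only [transpose_transpose] using hsM) Xᵀ
  rw [rank_transpose, rank_transpose, ← transpose_sub, fnorm_transpose, hr,
    Nat.cast_sub hXr] at hEY
  have hRIP := lamMin_mul_fnorm_sq_le A
    ((rank_sub_le X M).trans (by omega) : (X - M).rank ≤ 2 * r)
  rw [map_sub] at hRIP
  set D := (r : ℝ) - X.rank
  have hD : D * (ν * L * s ^ 2 - 2) ≤ 0 := by
    nlinarith [mul_le_mul_of_nonneg_left hEY (mul_nonneg hν.le hL.le)]
  have hD0 : D = 0 := le_antisymm (nonpos_of_mul_nonpos_left hD (by linarith))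
    (sub_nonneg.2 (by exact_mod_cast hXr))
  have hF : fnorm (X - M) ^ 2 ≤ 0 := by nlinarith [mul_le_mul_of_nonneg_left hRIP hν.le]
  have hF0 : fnorm (X - M) = 0 := pow_eq_zero_iff two_ne_zero |>.1 (hF.antisymm (sq_nonneg _))
  exact sub_eq_zero.1 (fnorm_eq_zero_iff.1 hF0)

theorem apply_eq_zero_of_mulVec_eq_zero {m k : ℕ} {U : Matrix (Fin m) (Fin k) ℝ}
    (hU : l20 U ≤ U.rank) {v : Fin k → ℝ} (hv : U *ᵥ v = 0) {j : Fin k}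
    (hj : (fun i => U i j) ≠ 0) : v j = 0 := by
  classical
  let J := {j : Fin k // U.col j ≠ 0}
  have hcard : Fintype.card J = l20 U := by
    rw [l20, Set.ncard_eq_toFinset_card', Set.toFinset_ofPred, Fintype.card_subtype]
    rfl
  have hspan : Submodule.span ℝ (Set.range fun j : J => U.col j) =
      Submodule.span ℝ (Set.range U.col) := by
    refine le_antisymm (Submodule.span_mono (Set.range_comp_subset_range _ _))
      (Submodule.span_le.2 ?_)
    rintro _ ⟨j, rfl⟩
    by_cases hj : U.col j = 0
    · simp [hj]
    · exact Submodule.subset_span ⟨⟨j, hj⟩, rfl⟩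
  have hli : LinearIndependent ℝ fun j : J => U.col j := by
    rw [linearIndependent_iff_card_eq_finrank_span]
    refine le_antisymm ?_ (finrank_range_le_card _)
    rw [hcard, Set.finrank, hspan, ← rank_eq_finrank_span_cols]
    exact hU
  have hsum : ∑ j : J, v j • U.col j = 0 := by
    rw [← Finset.sum_subtype (Finset.univ.filter fun j => U.col j ≠ 0) (by simp)
      (fun j => v j • U.col j),
      Finset.sum_filter_of_ne (p := fun j => U.col j ≠ 0) fun j _ h hc => h (by simp [hc]),
      ← hv, mulVec_eq_sum]
    simp [op_smul_eq_smul, col]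
  exact Fintype.linearIndependent_iff.1 hli (fun j => v j) hsum ⟨j, hj⟩

theorem le_sum_sq_of_col_ne_zero {m k : ℕ} {U : Matrix (Fin m) (Fin k) ℝ} (hU : l20 U ≤ U.rank)
    {s : ℝ} (hs : ∀ μ ∈ spectrum ℝ (Uᵀ * U), μ ≠ 0 → s ≤ μ) {j : Fin k}
    (hj : (fun i => U i j) ≠ 0) : s ≤ ∑ i, U i j ^ 2 := by
  have := (isHermitian_transpose_mul_self U).mul_dotProduct_self_le hs (x := Pi.single j 1)
    fun v hv => by
      rw [single_one_dotProduct]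
      exact apply_eq_zero_of_mulVec_eq_zero hU
        (mulVec_eq_zero_of_transpose_mul_self_mulVec_eq_zero hv) hj
  simpa [transpose_mul_self_apply_self] using this

theorem setOf_col_ne_zero_eq_of_transpose_mul_self_eq {m n k : ℕ} {U : Matrix (Fin m) (Fin k) ℝ}
    {V : Matrix (Fin n) (Fin k) ℝ} (hbal : Uᵀ * U = Vᵀ * V) :
    {j | (fun i => U i j) ≠ 0} = {j | (fun i => V i j) ≠ 0} := by
  ext j
  simp only [Set.mem_ofPred_eq, ← sum_sq_eq_zero_iff.not, ← transpose_mul_self_apply_self, hbal]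

theorem col_subset_of_fnorm_sub_sq_lt {m k : ℕ} {U U₀ : Matrix (Fin m) (Fin k) ℝ} {s : ℝ}
    (hcol : ∀ j, (fun i => U₀ i j) ≠ 0 → s ≤ ∑ i, U₀ i j ^ 2) (hd : fnorm (U - U₀) ^ 2 < s) :
    {j | (fun i => U₀ i j) ≠ 0} ⊆ {j | (fun i => U i j) ≠ 0} := by
  intro j hj hU
  have := sum_sq_col_le_fnorm_sq (U - U₀) j
  simp only [Matrix.sub_apply, show ∀ i, U i j = 0 from congrFun hU, zero_sub, neg_sq] at this
  exact (hcol j hj).not_gt (this.trans_lt hd)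

theorem l20_add_l20_le_of_Psi_sub_lt {m n κ : ℕ} {f : Matrix (Fin m) (Fin n) ℝ → ℝ} {ν μ : ℝ}
    (hν : 0 ≤ ν) (hμ : 0 ≤ μ) {U U₀ : Matrix (Fin m) (Fin κ) ℝ} {V V₀ : Matrix (Fin n) (Fin κ) ℝ}
    (hf : 0 ≤ f (U * Vᵀ)) (hf₀ : f (U₀ * V₀ᵀ) = 0) (hbal : U₀ᵀ * U₀ = V₀ᵀ * V₀)
    (h : Psi f ν μ U V - Psi f ν μ U₀ V₀ < 1 / 2) : l20 U + l20 V ≤ l20 U₀ + l20 V₀ := by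
  have hΨ₀ : Psi f ν μ U₀ V₀ = (l20 U₀ + l20 V₀) / 2 := by
    simp [Psi, hbal, hf₀, fnorm]
    ring
  have hΨ : (l20 U + l20 V : ℝ) ≤ 2 * Psi f ν μ U V := by
    rw [Psi]
    nlinarith [mul_nonneg hν hf, mul_nonneg hμ (sq_nonneg (fnorm (Uᵀ * U - Vᵀ * V)))]
  have : ((l20 U + l20 V : ℕ) : ℝ) < (l20 U₀ + l20 V₀ + 1 : ℕ) := by
    push_cast
    linarith
  exact Nat.lt_succ_iff.1 (Nat.cast_lt.1 this)

theorem stable_support_near_global_min_general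
    {m n p : ℕ} (A : Matrix (Fin m) (Fin n) ℝ →ₗ[ℝ] (Fin p → ℝ))
    (M : Matrix (Fin m) (Fin n) ℝ) (r : ℕ) (hr : M.rank = r) (hr1 : 1 ≤ r)
    (ν μ : ℝ) (hν : 0 < ν) (hμ : 0 < μ) (κ : ℕ)
    (f : Matrix (Fin m) (Fin n) ℝ → ℝ)
    (hf : ∀ X : Matrix (Fin m) (Fin n) ℝ, f X = (1 / 2) * (vnorm (A X - A M)) ^ 2)
    (hα : 2 / (ν * (singularValue r M) ^ 2) < lamMin A (2 * r))
    (Ubar : Matrix (Fin m) (Fin κ) ℝ) (Vbar : Matrix (Fin n) (Fin κ) ℝ)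
    (hWmem : (∀ X : Matrix (Fin m) (Fin n) ℝ,
        ν * f (Ubar * Vbarᵀ) + ((Ubar * Vbarᵀ).rank : ℝ) ≤ ν * f X + (X.rank : ℝ)) ∧
      (Ubar * Vbarᵀ).rank ≤ κ ∧ Ubarᵀ * Ubar = Vbarᵀ * Vbar ∧
      l20 Ubar = (Ubar * Vbarᵀ).rank ∧ l20 Vbar = (Ubar * Vbarᵀ).rank)
    (U : Matrix (Fin m) (Fin κ) ℝ) (V : Matrix (Fin n) (Fin κ) ℝ)
    (hdist : Real.sqrt ((fnorm (U - Ubar)) ^ 2 + (fnorm (V - Vbar)) ^ 2) <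
      Real.sqrt (singularValue r M) / 4)
    (hval1 : Psi f ν μ U V - Psi f ν μ Ubar Vbar < 1 / 2) :
    {j : Fin κ | (fun i => Ubar i j) ≠ 0} = {j : Fin κ | (fun i => Vbar i j) ≠ 0} ∧
    {j : Fin κ | (fun i => Ubar i j) ≠ 0} = {j : Fin κ | (fun i => U i j) ≠ 0} ∧
    {j : Fin κ | (fun i => Ubar i j) ≠ 0} = {j : Fin κ | (fun i => V i j) ≠ 0} := by
  obtain ⟨hmin, -, hbal, hlU, hlV⟩ := hWmem
  have hfM : f M = 0 := by simp [hf, vnorm]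
  have hMb : Ubar * Vbarᵀ = M := by
    have := hmin M
    rw [hfM, mul_zero, zero_add, hr, hf] at this
    exact eq_of_add_rank_le A hr hr1 hν hα this
  obtain ⟨hs, hsM⟩ := singularValue_pos_and_sq_le hr hr1
  have hG : ∀ μ ∈ spectrum ℝ (Ubarᵀ * Ubar), μ ≠ 0 → singularValue r M ≤ μ :=
    fun _ => le_of_mem_spectrum_of_balanced hbal hs.le (hMb ▸ hsM)
  have hcolU := fun j => le_sum_sq_of_col_ne_zero (j := j)
    (hlU.trans_le (rank_mul_le_left _ _)) hG
  have hcolV := fun j => le_sum_sq_of_col_ne_zero (j := j)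
    (hlV.trans_le ((rank_mul_le_right _ _).trans (rank_transpose _).le)) (hbal ▸ hG)
  have hd : fnorm (U - Ubar) ^ 2 + fnorm (V - Vbar) ^ 2 < singularValue r M / 16 := by
    rw [Real.sqrt_lt' (by positivity), div_pow, Real.sq_sqrt hs.le] at hdist
    linarith
  obtain ⟨hU, hV⟩ := Set.eq_and_eq_of_subset_of_ncard_add_le
    (col_subset_of_fnorm_sub_sq_lt hcolU (by nlinarith [sq_nonneg (fnorm (V - Vbar))]))
    (col_subset_of_fnorm_sub_sq_lt hcolV (by nlinarith [sq_nonneg (fnorm (U - Ubar))]))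
    (l20_add_l20_le_of_Psi_sub_lt hν.le hμ.le (by rw [hf]; positivity) (hMb ▸ hfM) hbal hval1)
  have hsupp := setOf_col_ne_zero_eq_of_transpose_mul_self_eq hbal
  exact ⟨hsupp, hU, hsupp.trans hV⟩

/-- near a global minimizer in `𝒲*`, sublevel points have the same set of
nonzero columns (Lemma 4.2). -/
theorem stable_support_near_global_min
    {m n p : ℕ} (A : Matrix (Fin m) (Fin n) ℝ →ₗ[ℝ] (Fin p → ℝ))
    (M : Matrix (Fin m) (Fin n) ℝ) (r : ℕ) (hr : M.rank = r) (hr1 : 1 ≤ r)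
    (ν μ : ℝ) (hν : 0 < ν) (hμ : 0 < μ) (κ : ℕ) (hκ : 1 ≤ κ)
    (f : Matrix (Fin m) (Fin n) ℝ → ℝ)
    (hf : ∀ X : Matrix (Fin m) (Fin n) ℝ, f X = (1 / 2) * (vnorm (A X - A M)) ^ 2)
    (hne : ∃ X0 : Matrix (Fin m) (Fin n) ℝ,
      (∀ X : Matrix (Fin m) (Fin n) ℝ,
        ν * f X0 + (X0.rank : ℝ) ≤ ν * f X + (X.rank : ℝ)) ∧ X0.rank ≤ κ)
    (hα : 2 / (ν * (singularValue r M) ^ 2) < lamMin A (2 * r))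
    (Ubar : Matrix (Fin m) (Fin κ) ℝ) (Vbar : Matrix (Fin n) (Fin κ) ℝ)
    (hWmem : (∀ X : Matrix (Fin m) (Fin n) ℝ,
        ν * f (Ubar * Vbarᵀ) + ((Ubar * Vbarᵀ).rank : ℝ) ≤ ν * f X + (X.rank : ℝ)) ∧
      (Ubar * Vbarᵀ).rank ≤ κ ∧ Ubarᵀ * Ubar = Vbarᵀ * Vbar ∧
      l20 Ubar = (Ubar * Vbarᵀ).rank ∧ l20 Vbar = (Ubar * Vbarᵀ).rank)
    (U : Matrix (Fin m) (Fin κ) ℝ) (V : Matrix (Fin n) (Fin κ) ℝ)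
    (hdist : Real.sqrt ((fnorm (U - Ubar)) ^ 2 + (fnorm (V - Vbar)) ^ 2) <
      Real.sqrt (singularValue r M) / 4)
    (hval0 : 0 < Psi f ν μ U V - Psi f ν μ Ubar Vbar)
    (hval1 : Psi f ν μ U V - Psi f ν μ Ubar Vbar < 1 / 2) :
    {j : Fin κ | (fun i => Ubar i j) ≠ 0} = {j : Fin κ | (fun i => Vbar i j) ≠ 0} ∧
    {j : Fin κ | (fun i => Ubar i j) ≠ 0} = {j : Fin κ | (fun i => U i j) ≠ 0} ∧
    {j : Fin κ | (fun i => Ubar i j) ≠ 0} = {j : Fin κ | (fun i => V i j) ≠ 0} :=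
  stable_support_near_global_min_general A M r hr hr1 ν μ hν hμ κ f hf hα Ubar Vbar hWmem U V hdist
    hval1

end Paper
end
end
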